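/- arXiv:2107.01950 — 8 statements merged into one kernel-verified Lean document; each statement's English description precedes it below -/
import Mathlib

section
/- Let B be a commutative ring and let F be a functor from commutative B-algebras to sets. Then the map F(B)/R → F(B[u])/R induced by the inclusion of B into the polynomial ring B[u] in one indeterminate u is bijective. -/
noncomputable section

open Polynomial

/-- The multiplicative subset `Σ` of `B[t]` consisting of the polynomials whose values
at `t = 0` and `t = 1` are units of `B`. -/
def RSigma (B : Type*) [CommRing B] : Submonoid (Polynomial B) where
  carrier := {P | IsUnit (P.eval 0) ∧ IsUnit (P.eval 1)}
  mul_mem' := fun ha hb =>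
    ⟨by rw [eval_mul]; exact ha.1.mul hb.1, by rw [eval_mul]; exact ha.2.mul hb.2⟩
  one_mem' := ⟨by simp, by simp⟩

theorem mem_RSigma {B : Type*} [CommRing B] {P : Polynomial B} :
    P ∈ RSigma B ↔ IsUnit (P.eval 0) ∧ IsUnit (P.eval 1) := Iff.rfl

/-- The localization `B[t]_Σ` of `B[t]` at `Σ`. -/
abbrev RLoc (B : Type*) [CommRing B] := Localization (RSigma B)

/-- Evaluation at `t = 0`, extended to `B[t]_Σ`, as a `B`-algebra homomorphism. -/
def ev0 (B : Type*) [CommRing B] : RLoc B →ₐ[B] B :=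
  IsLocalization.liftAlgHom (M := RSigma B) (f := Polynomial.aeval (0 : B))
    (fun y => by simpa using (mem_RSigma.mp y.2).1)

/-- Evaluation at `t = 1`, extended to `B[t]_Σ`, as a `B`-algebra homomorphism. -/
def ev1 (B : Type*) [CommRing B] : RLoc B →ₐ[B] B :=
  IsLocalization.liftAlgHom (M := RSigma B) (f := Polynomial.aeval (1 : B))
    (fun y => by simpa using (mem_RSigma.mp y.2).2)


universe u

variable (B : Type u) [CommRing B]

/-- A functor from the category of commutative `B`-algebras (in the universe `u`)
to the category of sets. -/
structure SetValuedFunctor (B : Type u) [CommRing B] where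
  obj : (C : Type u) → [CommRing C] → [Algebra B C] → Type u
  map : {C D : Type u} → [CommRing C] → [Algebra B C] → [CommRing D] → [Algebra B D] →
    (C →ₐ[B] D) → obj C → obj D
  map_id : ∀ (C : Type u) [CommRing C] [Algebra B C], map (AlgHom.id B C) = id
  map_comp : ∀ {C D E : Type u} [CommRing C] [Algebra B C] [CommRing D] [Algebra B D]
    [CommRing E] [Algebra B E] (f : C →ₐ[B] D) (g : D →ₐ[B] E),
    map (g.comp f) = map g ∘ map f

/-- Evaluation at `t = 0` on `C[t]_{Σ_C}`, as a homomorphism of `B`-algebras. -/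
def ev0R (C : Type u) [CommRing C] [Algebra B C] : RLoc C →ₐ[B] C :=
  IsLocalization.liftAlgHom (M := RSigma C)
    (f := (Polynomial.aeval (0 : C)).restrictScalars B)
    (fun y => by simpa using (mem_RSigma.mp y.2).1)

/-- Evaluation at `t = 1` on `C[t]_{Σ_C}`, as a homomorphism of `B`-algebras. -/
def ev1R (C : Type u) [CommRing C] [Algebra B C] : RLoc C →ₐ[B] C :=
  IsLocalization.liftAlgHom (M := RSigma C)
    (f := (Polynomial.aeval (1 : C)).restrictScalars B)
    (fun y => by simpa using (mem_RSigma.mp y.2).2)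

/-- Two points `x₀ x₁ ∈ F(C)` are directly R-equivalent if they are the two
evaluations of a point of `F(C[t]_Σ)`. -/
def DirectR (F : SetValuedFunctor B) (C : Type u) [CommRing C] [Algebra B C]
    (x₀ x₁ : F.obj C) : Prop :=
  ∃ x : F.obj (RLoc C), F.map (ev0R B C) x = x₀ ∧ F.map (ev1R B C) x = x₁

/-- R-equivalence: the equivalence relation generated by direct R-equivalence. -/
def REquiv (F : SetValuedFunctor B) (C : Type u) [CommRing C] [Algebra B C]
    (x₀ x₁ : F.obj C) : Prop :=
  Relation.EqvGen (DirectR B F C) x₀ x₁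

/-!
Evaluation at `u = 0` is a retraction of `B → B[u]`, and R-equivalence is preserved by every
algebra map, so the induced map on classes is injective. For surjectivity, the homotopy
`u ↦ t·u` with values in `B[u][t]_Σ` directly R-connects every `y ∈ F(B[u])` to the constant
point `y(0)`.
-/

namespace SetValuedFunctor

variable {B} {C D E : Type u} [CommRing C] [Algebra B C] [CommRing D] [Algebra B D]
  [CommRing E] [Algebra B E] (F : SetValuedFunctor B)

theorem map_map (f : C →ₐ[B] D) (g : D →ₐ[B] E) (x : F.obj C) :
    F.map g (F.map f x) = F.map (g.comp f) x := by
  rw [F.map_comp, Function.comp_apply]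

theorem map_map_of_comp_eq_id {f : C →ₐ[B] D} {g : D →ₐ[B] C}
    (hgf : g.comp f = AlgHom.id B C) (x : F.obj C) : F.map g (F.map f x) = x := by
  rw [map_map, hgf, F.map_id, id]

end SetValuedFunctor

section Functoriality

variable {B} {C D : Type u} [CommRing C] [Algebra B C] [CommRing D] [Algebra B D]

theorem map_mem_RSigma (f : C →ₐ[B] D) {P : C[X]} (hP : P ∈ RSigma C) :
    P.map (f : C →+* D) ∈ RSigma D :=
  ⟨by rw [eval_zero_map]; exact hP.1.map f, by rw [eval_one_map]; exact hP.2.map f⟩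

def mapRLoc (f : C →ₐ[B] D) : RLoc C →ₐ[B] RLoc D :=
  IsLocalization.liftAlgHom (M := RSigma C)
    (f := (IsScalarTower.toAlgHom B D[X] (RLoc D)).comp (mapAlgHom f))
    (fun P => IsLocalization.map_units (M := RSigma D) _ ⟨_, map_mem_RSigma f P.2⟩)

theorem mapRLoc_algebraMap (f : C →ₐ[B] D) (P : C[X]) :
    mapRLoc f (algebraMap C[X] (RLoc C) P) = algebraMap D[X] (RLoc D) (P.map (f : C →+* D)) :=
  IsLocalization.lift_eq (M := RSigma C) (S := RLoc C) _ P

theorem ev0R_algebraMap (P : C[X]) : ev0R B C (algebraMap C[X] (RLoc C) P) = P.eval 0 := by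
  simp [ev0R, IsLocalization.liftAlgHom_apply, IsLocalization.lift_eq]

theorem ev1R_algebraMap (P : C[X]) : ev1R B C (algebraMap C[X] (RLoc C) P) = P.eval 1 := by
  simp [ev1R, IsLocalization.liftAlgHom_apply, IsLocalization.lift_eq]

theorem ev0R_comp_mapRLoc (f : C →ₐ[B] D) :
    (ev0R B D).comp (mapRLoc f) = f.comp (ev0R B C) := by
  apply AlgHom.coe_ringHom_injective
  refine IsLocalization.ringHom_ext (RSigma C) (RingHom.ext fun P => ?_)
  simp [mapRLoc_algebraMap, ev0R_algebraMap, eval_zero_map]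

theorem ev1R_comp_mapRLoc (f : C →ₐ[B] D) :
    (ev1R B D).comp (mapRLoc f) = f.comp (ev1R B C) := by
  apply AlgHom.coe_ringHom_injective
  refine IsLocalization.ringHom_ext (RSigma C) (RingHom.ext fun P => ?_)
  simp [mapRLoc_algebraMap, ev1R_algebraMap, eval_one_map]

variable {F : SetValuedFunctor B}

theorem DirectR.map (f : C →ₐ[B] D) {x₀ x₁ : F.obj C} (h : DirectR B F C x₀ x₁) :
    DirectR B F D (F.map f x₀) (F.map f x₁) := by
  obtain ⟨x, rfl, rfl⟩ := h
  refine ⟨F.map (mapRLoc f) x, ?_, ?_⟩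
  · rw [F.map_map, F.map_map, ev0R_comp_mapRLoc]
  · rw [F.map_map, F.map_map, ev1R_comp_mapRLoc]

theorem REquiv.map (f : C →ₐ[B] D) {x₀ x₁ : F.obj C} (h : REquiv B F C x₀ x₁) :
    REquiv B F D (F.map f x₀) (F.map f x₁) := by
  induction h with
  | rel _ _ hxy => exact .rel _ _ (hxy.map f)
  | refl => exact .refl _
  | symm _ _ _ ih => exact ih.symm
  | trans _ _ _ _ _ ih₁ ih₂ => exact ih₁.trans _ _ _ ih₂

theorem REquiv.of_map_of_comp_eq_id {s : C →ₐ[B] D} {r : D →ₐ[B] C}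
    (hrs : r.comp s = AlgHom.id B C) {x₀ x₁ : F.obj C}
    (h : REquiv B F D (F.map s x₀) (F.map s x₁)) : REquiv B F C x₀ x₁ := by
  simpa only [F.map_map_of_comp_eq_id hrs] using h.map r

end Functoriality

section Homotopy

variable {B}

/-- The homotopy `u ↦ t·u`, as a map `B[u] → B[u][t]_Σ`. -/
def scalingHomotopy : B[X] →ₐ[B] RLoc B[X] :=
  (IsScalarTower.toAlgHom B B[X][X] (RLoc B[X])).comp (aeval (X * C X))

theorem ev0R_comp_scalingHomotopy :
    (ev0R B B[X]).comp scalingHomotopy = (Algebra.ofId B B[X]).comp (aeval 0) := by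
  apply algHom_ext
  simp [scalingHomotopy, ev0R_algebraMap]

theorem ev1R_comp_scalingHomotopy :
    (ev1R B B[X]).comp scalingHomotopy = AlgHom.id B B[X] := by
  apply algHom_ext
  simp [scalingHomotopy, ev1R_algebraMap]

theorem aeval_zero_comp_ofId : (aeval (0 : B)).comp (Algebra.ofId B B[X]) = AlgHom.id B B :=
  Algebra.ext_id _ _ _

theorem directR_map_ofId_map_aeval_zero (F : SetValuedFunctor B) (y : F.obj B[X]) :
    DirectR B F B[X] (F.map (Algebra.ofId B B[X]) (F.map (aeval 0) y)) y := by
  refine ⟨F.map scalingHomotopy y, ?_, ?_⟩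
  · rw [F.map_map, F.map_map, ev0R_comp_scalingHomotopy]
  · exact F.map_map_of_comp_eq_id ev1R_comp_scalingHomotopy y

end Homotopy

theorem homotopy_invariance_of_R_equivalence_classes
    (B : Type u) [CommRing B] (F : SetValuedFunctor B) :
    -- injectivity of `F(B)/R → F(B[u])/R`
    (∀ x₀ x₁ : F.obj B,
        REquiv B F (Polynomial B)
          (F.map (Algebra.ofId B (Polynomial B)) x₀)
          (F.map (Algebra.ofId B (Polynomial B)) x₁) →
        REquiv B F B x₀ x₁) ∧
    -- surjectivity of `F(B)/R → F(B[u])/R`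
    (∀ y : F.obj (Polynomial B), ∃ x : F.obj B,
        REquiv B F (Polynomial B) (F.map (Algebra.ofId B (Polynomial B)) x) y) :=
  ⟨fun _ _ => REquiv.of_map_of_comp_eq_id aeval_zero_comp_ofId,
    fun y => ⟨_, .rel _ _ (directR_map_ofId_map_aeval_zero F y)⟩⟩
end
end

section
/- Let B be a commutative ring and let C be a commutative B-algebra which, as a B-module, is finite locally free of rank d ≥ 1 (finitely generated, projective, of constant rank d). Let Σ_B ⊆ B[t] and Σ_C ⊆ C[t] denote the multiplicative subsets of polynomials whose values at t = 0 and t = 1 are units. Then the natural C-algebra homomorphism B[t]_{Σ_B} ⊗_B C → C[t]_{Σ_C}, induced by the inclusion B[t] → C[t] (which carries Σ_B into Σ_C) and the structure map C → C[t]_{Σ_C}, is an isomorphism. -/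
noncomputable section

open Polynomial

open TensorProduct

attribute [local instance] Algebra.TensorProduct.rightAlgebra

universe u

variable (B C : Type u) [CommRing B] [CommRing C] [Algebra B C]

/-- The inclusion `B[t] → C[t]`, extended to a `B`-algebra homomorphism
`B[t]_{Σ_B} → C[t]_{Σ_C}` (using that it carries `Σ_B` into `Σ_C`). -/
def locMap : RLoc B →ₐ[B] RLoc C :=
  IsLocalization.liftAlgHom (M := RSigma B)
    (f := (IsScalarTower.toAlgHom B (Polynomial C) (RLoc C)).comp
      (Polynomial.mapAlgHom (Algebra.ofId B C)))
    (fun y => by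
      have hmem : Polynomial.map (algebraMap B C) (y : Polynomial B) ∈ RSigma C :=
        mem_RSigma.mpr
          ⟨by rw [Polynomial.eval_zero_map]; exact ((mem_RSigma.mp y.2).1).map _,
           by rw [Polynomial.eval_one_map]; exact ((mem_RSigma.mp y.2).2).map _⟩
      have hu := IsLocalization.map_units (M := RSigma C) (RLoc C) ⟨_, hmem⟩
      simpa [Polynomial.mapAlgHom, Algebra.ofId, IsScalarTower.coe_toAlgHom'] using hu)

/-- The structure map `C → C[t]_{Σ_C}` as a `B`-algebra homomorphism. -/
def cToLoc : C →ₐ[B] RLoc C :=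
  (IsScalarTower.toAlgHom B (Polynomial C) (RLoc C)).comp
    (IsScalarTower.toAlgHom B C (Polynomial C))

/-- The natural `C`-algebra homomorphism `B[t]_{Σ_B} ⊗_B C → C[t]_{Σ_C}` induced by
the inclusion `B[t] → C[t]` and the structure map `C → C[t]_{Σ_C}`. -/
def tensorToLoc : (RLoc B ⊗[B] C) →ₐ[C] RLoc C :=
  { Algebra.TensorProduct.productMap (locMap B C) (cToLoc B C) with
    commutes' := fun c => by
      show Algebra.TensorProduct.productMap (locMap B C) (cToLoc B C)
          ((1 : RLoc B) ⊗ₜ[B] c) = algebraMap C (RLoc C) c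
      rw [Algebra.TensorProduct.productMap_apply_tmul, map_one, one_mul,
        IsScalarTower.algebraMap_apply C (Polynomial C) (RLoc C)]
      simp [cToLoc, IsScalarTower.coe_toAlgHom'] }

/-!
Write `C` as a direct summand of `Bⁿ`. For `P ∈ C[t]`, the determinant `σ ∈ B[t]` of the
endomorphism of `B[t]ⁿ` that multiplies the summand `C[t]` by `P` and fixes a complement plays
the role of a norm of `P`: Cayley–Hamilton gives `P ∣ σ`, and since its formation commutes with
evaluation, `σ(0)` and `σ(1)` are units as soon as `P(0)` and `P(1)` are. So inverting `Σ_B` in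
`C[t]` already inverts `Σ_C`, i.e. `C[t]_{Σ_C}` is the localization of `C[t] = B[t] ⊗_B C` at
`Σ_B`, which is `B[t]_{Σ_B} ⊗_B C`.
-/

theorem Algebra.IsPushout.bijective_productMap {R S R' S' : Type*} [CommSemiring R]
    [CommSemiring S] [CommSemiring R'] [CommSemiring S'] [Algebra R S] [Algebra R R']
    [Algebra R S'] [Algebra S S'] [Algebra R' S'] [IsScalarTower R S S'] [IsScalarTower R R' S']
    [Algebra.IsPushout R S R' S'] :
    Function.Bijective (Algebra.TensorProduct.productMap (IsScalarTower.toAlgHom R S S')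
      (IsScalarTower.toAlgHom R R' S')) := by
  convert (Algebra.IsPushout.equiv R S R' S').bijective
  ext x : 1
  induction x using TensorProduct.induction_on with
  | zero => simp only [map_zero]
  | tmul s r => simp [Algebra.IsPushout.equiv_tmul]
  | add x y hx hy => simp only [map_add, hx, hy]

section MulOnSummand

variable {A S F : Type*} [CommRing A] [CommRing S] [Algebra A S] [AddCommGroup F] [Module A F]

/-- When `h ∘ g = id`: multiplication by `s` on the summand `g(S)`, the identity on `ker h`. -/
def mulOnSummand (g : S →ₗ[A] F) (h : F →ₗ[A] S) (s : S) : Module.End A F :=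
  g ∘ₗ LinearMap.mulLeft A s ∘ₗ h + (1 - g ∘ₗ h)

variable {g : S →ₗ[A] F} {h : F →ₗ[A] S}

theorem mulOnSummand_apply (s : S) (x : F) :
    mulOnSummand g h s x = g (s * h x) + (x - g (h x)) := rfl

theorem mulOnSummand_one : mulOnSummand g h 1 = 1 := by
  ext x
  simp [mulOnSummand_apply]

theorem mulOnSummand_apply_map (hgh : Function.LeftInverse h g) (s t : S) :
    mulOnSummand g h s (g t) = g (s * t) := by
  rw [mulOnSummand_apply, hgh t, sub_self, add_zero]

theorem mulOnSummand_mul (hgh : Function.LeftInverse h g) (s t : S) :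
    mulOnSummand g h (s * t) = mulOnSummand g h s * mulOnSummand g h t := by
  ext x
  simp only [Module.End.mul_apply, mulOnSummand_apply, map_add, map_sub, hgh _, mul_assoc]
  abel

theorem isUnit_det_mulOnSummand (hgh : Function.LeftInverse h g) {s : S} (hs : IsUnit s) :
    IsUnit (LinearMap.det (mulOnSummand g h s)) :=
  let φ : S →* Module.End A F :=
    { toFun := mulOnSummand g h
      map_one' := mulOnSummand_one
      map_mul' := mulOnSummand_mul hgh }
  LinearMap.isUnit_det _ (hs.map φ)

theorem aeval_mulOnSummand_apply_map (hgh : Function.LeftInverse h g) (s : S) (q : A[X]) (t : S) :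
    aeval (mulOnSummand g h s) q (g t) = g (aeval s q * t) := by
  induction q using Polynomial.induction_on' with
  | add p q hp hq => simp only [map_add, LinearMap.add_apply, hp, hq, add_mul]
  | monomial k a =>
    have hpow : ∀ t, (mulOnSummand g h s ^ k) (g t) = g (s ^ k * t) := by
      induction k with
      | zero => simp
      | succ k ih =>
        intro t
        rw [pow_succ, Module.End.mul_apply, mulOnSummand_apply_map hgh, ih, pow_succ, mul_assoc]
    rw [aeval_monomial, aeval_monomial, Module.End.mul_apply, Module.algebraMap_end_apply, hpow,
      mul_assoc, ← Algebra.smul_def, map_smul]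

theorem dvd_algebraMap_det_mulOnSummand [Module.Free A F] [Module.Finite A F]
    (hgh : Function.LeftInverse h g) (s : S) :
    s ∣ algebraMap A S (LinearMap.det (mulOnSummand g h s)) := by
  set χ := (mulOnSummand g h s).charpoly
  have hχ : aeval s χ = 0 := by
    have := congr_arg h (aeval_mulOnSummand_apply_map hgh s χ 1)
    rwa [LinearMap.aeval_self_charpoly, LinearMap.zero_apply, map_zero, mul_one, hgh,
      eq_comm] at this
  have hdvd : s ∣ algebraMap A S (χ.coeff 0) := by
    simpa [hχ] using map_dvd (aeval s) (X_dvd_sub_C (p := χ))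
  rw [LinearMap.det_eq_sign_charpoly_coeff, map_mul]
  exact hdvd.mul_left _

end MulOnSummand

section PolynomialLift

attribute [local instance] Polynomial.algebra

variable {R S : Type*} [CommRing R] [CommRing S] [Algebra R S] {ι : Type*}

theorem isBaseChange_polynomial :
    IsBaseChange R[X] (IsScalarTower.toAlgHom R S S[X]).toLinearMap :=
  Algebra.IsPushout.out

def polyToPi (g : S →ₗ[R] (ι → R)) : S[X] →ₗ[R[X]] (ι → R[X]) :=
  isBaseChange_polynomial.lift ((Algebra.linearMap R R[X]).compLeft ι ∘ₗ g)

def polyOfPi [Fintype ι] (h : (ι → R) →ₗ[R] S) : (ι → R[X]) →ₗ[R[X]] S[X] :=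
  (IsBaseChange.finitePow ι (IsBaseChange.linearMap R R[X])).lift
    ((IsScalarTower.toAlgHom R S S[X]).toLinearMap ∘ₗ h)

variable {g : S →ₗ[R] (ι → R)} {h : (ι → R) →ₗ[R] S}

theorem polyToPi_C (c : S) : polyToPi g (Polynomial.C c) = fun i ↦ Polynomial.C (g c i) :=
  isBaseChange_polynomial.lift_eq _ c

theorem polyOfPi_C [Fintype ι] (v : ι → R) :
    polyOfPi h (fun i ↦ Polynomial.C (v i)) = Polynomial.C (h v) :=
  (IsBaseChange.finitePow ι (IsBaseChange.linearMap R R[X])).lift_eq _ v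

theorem leftInverse_polyOfPi_polyToPi [Fintype ι] (hgh : Function.LeftInverse h g) :
    Function.LeftInverse (polyOfPi h) (polyToPi g) := by
  have : polyOfPi h ∘ₗ polyToPi g = LinearMap.id :=
    isBaseChange_polynomial.algHom_ext _ _ fun c ↦ by
      change polyOfPi h (polyToPi g (Polynomial.C c)) = Polynomial.C c
      rw [polyToPi_C, polyOfPi_C, hgh]
  exact LinearMap.congr_fun this

theorem eval_polyToPi (Q : S[X]) (r : R) (i : ι) :
    (polyToPi g Q i).eval r = g (Q.eval (algebraMap R S r)) i := by
  induction Q using Polynomial.induction_on' with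
  | add p q hp hq => simp [hp, hq]
  | monomial k c =>
    have : monomial k c = (X ^ k : R[X]) • Polynomial.C c := by
      rw [Algebra.smul_def, Polynomial.algebraMap_def, coe_mapRingHom, Polynomial.map_pow, map_X,
        C_mul_X_pow_eq_monomial.symm.trans (mul_comm _ _)]
    rw [eval_monomial, this, map_smul, polyToPi_C, ← map_pow, mul_comm, ← Algebra.smul_def,
      map_smul]
    simp only [Pi.smul_apply, smul_eq_mul, eval_mul, eval_pow, eval_X, eval_C]

theorem eval_det_mulOnSummand_polyToPi [Fintype ι] [DecidableEq ι] (P : S[X]) (r : R) :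
    (LinearMap.det (mulOnSummand (polyToPi g) (polyOfPi h) P)).eval r =
      LinearMap.det (mulOnSummand g h (P.eval (algebraMap R S r))) := by
  rw [← LinearMap.det_toMatrix', ← LinearMap.det_toMatrix', ← coe_evalRingHom,
    RingHom.map_det]
  congr 1
  ext i j
  have hsingle :
      (Pi.single j 1 : ι → R[X]) = fun k ↦ Polynomial.C ((Pi.single j 1 : ι → R) k) := by
    ext k : 1
    by_cases hk : k = j <;> simp [hk]
  simp only [RingHom.mapMatrix_apply, Matrix.map_apply, LinearMap.toMatrix'_apply,
    mulOnSummand_apply, coe_evalRingHom, hsingle, polyOfPi_C]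
  simp [eval_polyToPi]

end PolynomialLift

section Sigma

attribute [local instance] Polynomial.algebra

variable {R S : Type*} [CommRing R] [CommRing S]

theorem map_mem_RSigma_s9 (f : R →+* S) {σ : R[X]} (hσ : σ ∈ RSigma R) :
    σ.map f ∈ RSigma S :=
  ⟨by rw [eval_zero_map]; exact hσ.1.map f, by rw [eval_one_map]; exact hσ.2.map f⟩

theorem Polynomial.exists_dvd_map_forall_isUnit_eval [Algebra R S] [Module.Finite R S]
    [Module.Projective R S] (P : S[X]) : ∃ σ : R[X], P ∣ σ.map (algebraMap R S) ∧
      ∀ r : R, IsUnit (P.eval (algebraMap R S r)) → IsUnit (σ.eval r) := by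
  obtain ⟨n, h, hh⟩ := Module.Finite.exists_fin' R S
  obtain ⟨g, hgh⟩ := Module.projective_lifting_property h LinearMap.id hh
  have hgh : Function.LeftInverse h g := LinearMap.congr_fun hgh
  refine ⟨LinearMap.det (mulOnSummand (polyToPi g) (polyOfPi h) P),
    dvd_algebraMap_det_mulOnSummand (leftInverse_polyOfPi_polyToPi hgh) P, fun r hr ↦ ?_⟩
  rw [eval_det_mulOnSummand_polyToPi]
  exact isUnit_det_mulOnSummand hgh hr

theorem exists_mem_RSigma_dvd_map [Algebra R S] [Module.Finite R S] [Module.Projective R S]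
    {P : S[X]} (hP : P ∈ RSigma S) : ∃ σ ∈ RSigma R, P ∣ σ.map (algebraMap R S) := by
  obtain ⟨σ, hdvd, hunit⟩ := P.exists_dvd_map_forall_isUnit_eval (R := R)
  refine ⟨σ, ⟨hunit 0 ?_, hunit 1 ?_⟩, hdvd⟩
  · simpa using hP.1
  · simpa using hP.2

theorem isLocalization_algebraMapSubmonoid_RSigma [Algebra R S] [Module.Finite R S]
    [Module.Projective R S] :
    IsLocalization (Algebra.algebraMapSubmonoid S[X] (RSigma R)) (RLoc S) := by
  refine (IsLocalization.iff_of_le_of_exists_dvd _ (RSigma S) ?_ ?_).mpr inferInstance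
  · rintro _ ⟨σ, hσ, rfl⟩
    exact map_mem_RSigma_s9 _ hσ
  · intro P hP
    obtain ⟨σ, hσ, hdvd⟩ := exists_mem_RSigma_dvd_map (R := R) hP
    exact ⟨_, ⟨σ, hσ, rfl⟩, hdvd⟩

end Sigma

section Pushout

theorem locMap_algebraMap (p : B[X]) :
    locMap B C (algebraMap B[X] (RLoc B) p) =
      algebraMap C[X] (RLoc C) (p.map (algebraMap B C)) := by
  rw [locMap, IsLocalization.liftAlgHom_apply, IsLocalization.lift_eq]
  rfl

attribute [local instance] Polynomial.algebra

instance : Algebra (RLoc B) (RLoc C) := (locMap B C).toRingHom.toAlgebra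

instance isScalarTower_locAlgebra : IsScalarTower B (RLoc B) (RLoc C) :=
  IsScalarTower.of_algebraMap_eq' (locMap B C).comp_algebraMap.symm

instance isScalarTower_polynomial_locAlgebra : IsScalarTower B[X] (RLoc B) (RLoc C) :=
  IsScalarTower.of_algebraMap_eq (R := B[X]) (S := RLoc B) (A := RLoc C) fun p ↦
    (IsScalarTower.algebraMap_apply B[X] C[X] (RLoc C) p).trans (locMap_algebraMap B C p).symm

theorem isPushout_RLoc [Module.Finite B C] [Module.Projective B C] :
    Algebra.IsPushout B (RLoc B) C (RLoc C) := by
  have := isLocalization_algebraMapSubmonoid_RSigma (R := B) (S := C)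
  rw [Algebra.IsPushout.comp_iff B B[X] C (T := RLoc B) (S' := C[X])]
  exact (Algebra.isPushout_of_isLocalization (RSigma B) (RLoc B) C[X] (RLoc C)).symm

theorem coe_tensorToLoc : ⇑(tensorToLoc B C) =
    Algebra.TensorProduct.productMap (IsScalarTower.toAlgHom B (RLoc B) (RLoc C))
      (IsScalarTower.toAlgHom B C (RLoc C)) := by
  have hc : cToLoc B C = IsScalarTower.toAlgHom B C (RLoc C) := by
    ext c
    exact (IsScalarTower.algebraMap_apply C C[X] (RLoc C) c).symm
  rw [← hc]
  rfl

end Pushout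

theorem tensorToLoc_bijective
    [Module.Finite B C] [Module.Projective B C] :
    Function.Bijective (tensorToLoc B C) := by
  have := isPushout_RLoc B C
  rw [coe_tensorToLoc]
  exact Algebra.IsPushout.bijective_productMap
end
end

section
/- Let B be a commutative ring, let A be a commutative B-algebra and let f ∈ A. Let x₀, x₁ : A → B be B-algebra homomorphisms with x₀(f) ∈ B^× and x₁(f) ∈ B^×. Suppose there exists a B-algebra homomorphism x : A → B[t]_Σ with ev₀ ∘ x = x₀ and ev₁ ∘ x = x₁. Then x(f) is a unit in B[t]_Σ; in particular x factors through the localization A_f, so x₀ and x₁ (viewed as B-algebra homomorphisms A_f → B) are directly R-equivalent as points of Spec(A_f). -/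
/-!
STATEMENT 11: Let `B` be a commutative ring, `A` a commutative `B`-algebra and `f ∈ A`.
Let `x₀, x₁ : A → B` be `B`-algebra homomorphisms with `x₀(f), x₁(f) ∈ B^×`, and suppose
there is a `B`-algebra homomorphism `x : A → B[t]_Σ` with `ev₀ ∘ x = x₀`, `ev₁ ∘ x = x₁`.
Then `x(f)` is a unit of `B[t]_Σ`; in particular `x` factors through `A_f`, so `x₀` and
`x₁` (viewed as points of `Spec A_f`) are directly R-equivalent.
-/

noncomputable section

open Polynomial

/- An element of `B[t]_Σ` is a unit as soon as its values at `t = 0` and `t = 1` are: writing it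
as `p / s` with `s ∈ Σ`, the values of `p` at `0` and `1` are then units, i.e. `p ∈ Σ`. Hence
`x(f)` is a unit, and `x` factors through `A_f` by the universal property of localization. -/

theorem ev0_algebraMap {B : Type*} [CommRing B] (p : Polynomial B) :
    ev0 B (algebraMap (Polynomial B) (RLoc B) p) = p.eval 0 := by
  simp [ev0, IsLocalization.lift_eq]

theorem ev1_algebraMap {B : Type*} [CommRing B] (p : Polynomial B) :
    ev1 B (algebraMap (Polynomial B) (RLoc B) p) = p.eval 1 := by
  simp [ev1, IsLocalization.lift_eq]

theorem RLoc.isUnit_iff_isUnit_ev0_and_isUnit_ev1 {B : Type*} [CommRing B] {z : RLoc B} :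
    IsUnit z ↔ IsUnit (ev0 B z) ∧ IsUnit (ev1 B z) := by
  refine ⟨fun hz => ⟨hz.map (ev0 B), hz.map (ev1 B)⟩, fun ⟨h0, h1⟩ => ?_⟩
  obtain ⟨⟨p, s⟩, rfl⟩ := IsLocalization.mk'_surjective (RSigma B) z
  have hspec := IsLocalization.mk'_spec (RLoc B) p s
  have hs := mem_RSigma.mp s.2
  have hp : p ∈ RSigma B := by
    rw [mem_RSigma, ← ev0_algebraMap, ← ev1_algebraMap, ← hspec, map_mul, map_mul,
      ev0_algebraMap, ev1_algebraMap]
    exact ⟨h0.mul hs.1, h1.mul hs.2⟩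
  exact isUnit_of_mul_isUnit_left (hspec ▸ IsLocalization.map_units (RLoc B) ⟨p, hp⟩)

theorem IsLocalization.Away.exists_algHom_comp_eq {R A S P : Type*} [CommSemiring R]
    [CommSemiring A] [Algebra R A] [CommSemiring S] [Algebra R S] [Algebra A S]
    [IsScalarTower R A S] [CommSemiring P] [Algebra R P] (f : A) [IsLocalization.Away f S]
    (g : A →ₐ[R] P) (hg : IsUnit (g f)) :
    ∃ g' : S →ₐ[R] P, g'.comp (IsScalarTower.toAlgHom R A S) = g := by
  have hpow : ∀ y : Submonoid.powers f, IsUnit (g y) := by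
    rintro ⟨-, n, rfl⟩
    simpa using hg.pow n
  exact ⟨IsLocalization.liftAlgHom hpow, AlgHom.ext fun a => IsLocalization.lift_eq hpow a⟩

theorem direct_R_equivalence_lifts_to_principal_open
    (B : Type*) [CommRing B] (A : Type*) [CommRing A] [Algebra B A] (f : A)
    (x₀ x₁ : A →ₐ[B] B) (h₀ : IsUnit (x₀ f)) (h₁ : IsUnit (x₁ f))
    (x : A →ₐ[B] RLoc B)
    (hx₀ : (ev0 B).comp x = x₀) (hx₁ : (ev1 B).comp x = x₁) :
    IsUnit (x f) ∧
      ∃ (x' : Localization.Away f →ₐ[B] RLoc B)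
        (y₀ y₁ : Localization.Away f →ₐ[B] B),
        x'.comp (IsScalarTower.toAlgHom B A (Localization.Away f)) = x ∧
        y₀.comp (IsScalarTower.toAlgHom B A (Localization.Away f)) = x₀ ∧
        y₁.comp (IsScalarTower.toAlgHom B A (Localization.Away f)) = x₁ ∧
        (ev0 B).comp x' = y₀ ∧ (ev1 B).comp x' = y₁ := by
  have hxf : IsUnit (x f) := by
    rw [RLoc.isUnit_iff_isUnit_ev0_and_isUnit_ev1, ← AlgHom.comp_apply, ← AlgHom.comp_apply,
      hx₀, hx₁]
    exact ⟨h₀, h₁⟩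
  obtain ⟨x', hx'⟩ := IsLocalization.Away.exists_algHom_comp_eq (S := Localization.Away f) f x hxf
  refine ⟨hxf, x', (ev0 B).comp x', (ev1 B).comp x', hx', ?_, ?_, rfl, rfl⟩
  · rw [AlgHom.comp_assoc, hx', hx₀]
  · rw [AlgHom.comp_assoc, hx', hx₁]
end
end

section
/- Let B be a commutative ring, let H be a commutative Hopf algebra over B, and for every commutative B-algebra C let G(C) denote the group (under convolution) of B-algebra homomorphisms H → C. Let f ∈ H, and let U be the principal open subset of G defined by f, so that U(C) = {φ ∈ G(C) : φ(f) ∈ C^×} is the set of B-algebra homomorphisms H_f → C. Then the natural map U(B)/R → G(B)/R is injective: if φ₀, φ₁ ∈ U(B) are R-equivalent in G(B), then they are directly R-equivalent in U(B), i.e. there exists a B-algebra homomorphism φ : H → B[t]_Σ with φ(f) ∈ (B[t]_Σ)^×, ev₀ ∘ φ = φ₀ and ev₁ ∘ φ = φ₁. -/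
/-!
STATEMENT 13: Let `B` be a commutative ring, `H` a commutative Hopf algebra over `B`,
and `G(C)` the group of `B`-algebra homomorphisms `H → C` (under convolution).
Let `f ∈ H` and let `U` be the principal open subset of `G` defined by `f`, so that
`U(C) = {φ ∈ G(C) : φ(f) ∈ C^×}`.  Then the natural map `U(B)/R → G(B)/R` is injective:
if `φ₀, φ₁ ∈ U(B)` are R-equivalent in `G(B)` then they are directly R-equivalent in
`U(B)`, i.e. there is a `B`-algebra homomorphism `φ : H → B[t]_Σ` with
`φ(f) ∈ (B[t]_Σ)^×`, `ev₀ ∘ φ = φ₀` and `ev₁ ∘ φ = φ₁`.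
-/

noncomputable section

open Polynomial

/-- Direct R-equivalence of two -points of the affine group scheme . -/
def DirectlyREquivPoints (B : Type*) [CommRing B] (H : Type*) [CommRing H] [Algebra B H]
    (ψ₀ ψ₁ : H →ₐ[B] B) : Prop :=
  ∃ φ : H →ₐ[B] RLoc B, (ev0 B).comp φ = ψ₀ ∧ (ev1 B).comp φ = ψ₁

/-!
Direct R-equivalence is already an equivalence relation on `G(B)`: constant paths give
reflexivity, the substitution `t ↦ 1 - t` (which preserves `Σ`) gives symmetry, and two paths
`χ` from `ψ₀` to `ψ₁` and `χ'` from `ψ₁` to `ψ₂` are concatenated by the convolution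
`χ * ψ₁⁻¹ * χ'`, where `ψ₁⁻¹` is the constant path at the inverse of `ψ₁` in `G(B)`. So an
R-equivalence between `φ₀` and `φ₁` is witnessed by a single path `φ`, and `φ f` is a unit of
`B[t]_Σ` because its values at `t = 0` and `t = 1` are the units `φ₀ f` and `φ₁ f`.
-/

open WithConv

namespace AlgHom

variable {R H C C' : Type*} [CommSemiring R] [Semiring H] [Bialgebra R H]
  [CommSemiring C] [Algebra R C] [CommSemiring C'] [Algebra R C']

def compConvMonoidHom (θ : C →ₐ[R] C') : WithConv (H →ₐ[R] C) →* WithConv (H →ₐ[R] C') where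
  toFun f := toConv (θ.comp f.ofConv)
  map_one' := by ext; simp
  map_mul' f g := congrArg toConv (comp_convMul_distrib θ f g)

@[simp]
lemma compConvMonoidHom_toConv (θ : C →ₐ[R] C') (f : H →ₐ[R] C) :
    θ.compConvMonoidHom (toConv f) = toConv (θ.comp f) :=
  rfl

end AlgHom

lemma AlgHom.comp_ofId_comp {R A C : Type*} [CommSemiring R] [Semiring A] [Algebra R A]
    [Semiring C] [Algebra R C] (θ : C →ₐ[R] R) (ψ : A →ₐ[R] R) :
    θ.comp ((Algebra.ofId R C).comp ψ) = ψ :=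
  AlgHom.ext fun x => θ.commutes (ψ x)

section Evaluation

variable (B : Type*) [CommRing B]

@[simp]
lemma ev0_algebraMap_s13 (P : B[X]) : ev0 B (algebraMap B[X] (RLoc B) P) = P.eval 0 := by
  simp [ev0, IsLocalization.lift_eq]

@[simp]
lemma ev1_algebraMap_s13 (P : B[X]) : ev1 B (algebraMap B[X] (RLoc B) P) = P.eval 1 := by
  simp [ev1, IsLocalization.lift_eq]

variable {B} in
lemma isUnit_of_isUnit_ev0_of_isUnit_ev1 {x : RLoc B} (h0 : IsUnit (ev0 B x))
    (h1 : IsUnit (ev1 B x)) : IsUnit x := by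
  obtain ⟨P, s, rfl⟩ := IsLocalization.exists_mk'_eq (RSigma B) x
  have hP := IsLocalization.mk'_spec (RLoc B) P s
  have hs := mem_RSigma.mp s.2
  have hP0 := congrArg (ev0 B) hP
  have hP1 := congrArg (ev1 B) hP
  rw [map_mul, ev0_algebraMap_s13, ev0_algebraMap_s13] at hP0
  rw [map_mul, ev1_algebraMap_s13, ev1_algebraMap_s13] at hP1
  have hP_mem : P ∈ RSigma B := ⟨hP0 ▸ h0.mul hs.1, hP1 ▸ h1.mul hs.2⟩
  exact isUnit_of_mul_isUnit_left (hP ▸ IsLocalization.map_units (RLoc B) ⟨P, hP_mem⟩)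

lemma comp_one_sub_X_mem_RSigma {P : B[X]} (hP : P ∈ RSigma B) : P.comp (1 - X) ∈ RSigma B := by
  simpa [mem_RSigma, and_comm] using hP

def RLoc.reflect : RLoc B →ₐ[B] RLoc B :=
  IsLocalization.liftAlgHom (M := RSigma B)
    (f := (IsScalarTower.toAlgHom B B[X] (RLoc B)).comp (aeval (1 - X)))
    (fun P => by
      simpa [← comp_eq_aeval] using
        IsLocalization.map_units (RLoc B) ⟨_, comp_one_sub_X_mem_RSigma B P.2⟩)

lemma ev0_comp_reflect : (ev0 B).comp (RLoc.reflect B) = ev1 B := by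
  ext
  simp [RLoc.reflect, Algebra.algHom, IsLocalization.lift_eq]

lemma ev1_comp_reflect : (ev1 B).comp (RLoc.reflect B) = ev0 B := by
  ext
  simp [RLoc.reflect, Algebra.algHom, IsLocalization.lift_eq]

end Evaluation

section DirectREquivalence

variable {B : Type*} [CommRing B] {H : Type*} [CommRing H]

lemma DirectlyREquivPoints.refl [Algebra B H] (ψ : H →ₐ[B] B) : DirectlyREquivPoints B H ψ ψ :=
  ⟨(Algebra.ofId B (RLoc B)).comp ψ, (ev0 B).comp_ofId_comp ψ, (ev1 B).comp_ofId_comp ψ⟩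

lemma DirectlyREquivPoints.symm [Algebra B H] {ψ₀ ψ₁ : H →ₐ[B] B}
    (h : DirectlyREquivPoints B H ψ₀ ψ₁) : DirectlyREquivPoints B H ψ₁ ψ₀ := by
  obtain ⟨χ, h₀, h₁⟩ := h
  exact ⟨(RLoc.reflect B).comp χ, by rw [← AlgHom.comp_assoc, ev0_comp_reflect, h₁],
    by rw [← AlgHom.comp_assoc, ev1_comp_reflect, h₀]⟩

lemma DirectlyREquivPoints.trans [HopfAlgebra B H] {ψ₀ ψ₁ ψ₂ : H →ₐ[B] B}
    (h : DirectlyREquivPoints B H ψ₀ ψ₁) (h' : DirectlyREquivPoints B H ψ₁ ψ₂) :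
    DirectlyREquivPoints B H ψ₀ ψ₂ := by
  obtain ⟨χ, h₀, h₁⟩ := h
  obtain ⟨χ', h₁', h₂⟩ := h'
  set concat := (toConv χ * toConv ((Algebra.ofId B (RLoc B)).comp (toConv ψ₁)⁻¹.ofConv) *
    toConv χ').ofConv
  have hconcat (θ : RLoc B →ₐ[B] B) :
      toConv (θ.comp concat) = toConv (θ.comp χ) * (toConv ψ₁)⁻¹ * toConv (θ.comp χ') := by
    rw [← θ.compConvMonoidHom_toConv, toConv_ofConv, map_mul, map_mul,
      θ.compConvMonoidHom_toConv, θ.compConvMonoidHom_toConv, θ.compConvMonoidHom_toConv,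
      θ.comp_ofId_comp, toConv_ofConv]
  exact ⟨concat, toConv_injective (by rw [hconcat, h₀, h₁', inv_mul_cancel_right]),
    toConv_injective (by rw [hconcat, h₁, h₂, mul_inv_cancel, one_mul])⟩

theorem directlyREquivPoints_equivalence [HopfAlgebra B H] :
    Equivalence (DirectlyREquivPoints B H) :=
  ⟨DirectlyREquivPoints.refl, DirectlyREquivPoints.symm, DirectlyREquivPoints.trans⟩

end DirectREquivalence

theorem R_equiv_in_G_implies_directly_R_equiv_in_principal_open
    (B : Type*) [CommRing B] (H : Type*) [CommRing H] [HopfAlgebra B H] (f : H)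
    (φ₀ φ₁ : H →ₐ[B] B) (h₀ : IsUnit (φ₀ f)) (h₁ : IsUnit (φ₁ f))
    (h : Relation.EqvGen (DirectlyREquivPoints B H) φ₀ φ₁) :
    ∃ φ : H →ₐ[B] RLoc B,
      IsUnit (φ f) ∧ (ev0 B).comp φ = φ₀ ∧ (ev1 B).comp φ = φ₁ := by
  obtain ⟨φ, hφ₀, hφ₁⟩ := directlyREquivPoints_equivalence.eqvGen_iff.mp h
  refine ⟨φ, isUnit_of_isUnit_ev0_of_isUnit_ev1 ?_ ?_, hφ₀, hφ₁⟩
  · rwa [← AlgHom.comp_apply, hφ₀]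
  · rwa [← AlgHom.comp_apply, hφ₁]
end
end

section
/- Let B be a commutative ring with finitely many maximal ideals 𝔪₁,…,𝔪_r. Then the ring B[t]_Σ is semilocal; more precisely, every maximal ideal of B[t]_Σ is the extension of one of the 2r maximal ideals 𝔪ᵢ·B[t] + t·B[t] or 𝔪ᵢ·B[t] + (t−1)·B[t] (1 ≤ i ≤ r) of B[t], and Σ is exactly the set of polynomials of B[t] lying in none of these ideals, so that B[t]_Σ is the semilocalization of B[t] at these maximal ideals. -/
noncomputable section

open Polynomial

/-!
STATEMENT 15: Let `B` be a commutative ring with finitely many maximal ideals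
`𝔪₁,…,𝔪_r`.  Then `B[t]_Σ` is semilocal; more precisely, every maximal ideal of
`B[t]_Σ` is the extension of one of the `2r` maximal ideals
`𝔪ᵢ·B[t] + t·B[t]` or `𝔪ᵢ·B[t] + (t−1)·B[t]` of `B[t]`, and `Σ` is exactly the set of
polynomials of `B[t]` lying in none of these ideals, so that `B[t]_Σ` is the
semilocalization of `B[t]` at these maximal ideals.
-/

/-- The ideal `𝔪·B[t] + (t − e)·B[t]` of `B[t]`. -/
def satIdeal (B : Type*) [CommRing B] (𝔪 : Ideal B) (e : B) : Ideal (Polynomial B) :=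
  Ideal.map (Polynomial.C : B →+* Polynomial B) 𝔪 ⊔
    Ideal.span {Polynomial.X - Polynomial.C e}

/-!
A polynomial `P` lies in `𝔪·B[t] + (t − e)·B[t]` exactly when `P(e) ∈ 𝔪`, so these ideals are the
pullbacks of the maximal ideals of `B` along evaluation at `e`, and `Σ` is the set of polynomials
avoiding all of them for `e ∈ {0, 1}`. Conversely, an ideal `I` of `B[t]` disjoint from `Σ` lies in
one of them: otherwise `I` contains `p` and `q` with `p(0) = 1` and `q(1) = 1`, and then
`1 − (1 − p)(1 − q) ∈ I ∩ Σ`. Applied to the contraction of a maximal ideal of `B[t]_Σ`, this shows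
that every maximal ideal of `B[t]_Σ` is the extension of one of the `2r` ideals.
-/

theorem isUnit_iff_forall_notMem_of_isMaximal {R : Type*} [CommSemiring R] {x : R} :
    IsUnit x ↔ ∀ 𝔪 : Ideal R, 𝔪.IsMaximal → x ∉ 𝔪 :=
  ⟨fun hx _ h𝔪 hx𝔪 => h𝔪.ne_top (Ideal.eq_top_of_isUnit_mem _ hx𝔪 hx),
    fun h => by_contra fun hx =>
      let ⟨𝔪, h𝔪, hx𝔪⟩ := exists_max_ideal_of_mem_nonunits hx
      h 𝔪 h𝔪 hx𝔪⟩

section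

variable {B : Type*} [CommRing B]

theorem satIdeal_eq_comap_evalRingHom (𝔪 : Ideal B) (e : B) :
    satIdeal B 𝔪 e = 𝔪.comap (evalRingHom e) := by
  have hmap : (𝔪.map (C : B →+* B[X])).map (evalRingHom e) = 𝔪 := by
    rw [Ideal.map_map, show (evalRingHom e).comp C = RingHom.id B from
      RingHom.ext fun _ => eval_C, Ideal.map_id]
  calc satIdeal B 𝔪 e = 𝔪.map C ⊔ RingHom.ker (evalRingHom e) := by rw [ker_evalRingHom]; rfl
    _ = ((𝔪.map C).map (evalRingHom e)).comap (evalRingHom e) :=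
      (Ideal.comap_map_of_surjective' _ (eval_surjective e) _).symm
    _ = 𝔪.comap (evalRingHom e) := by rw [hmap]

theorem mem_satIdeal {𝔪 : Ideal B} {e : B} {P : B[X]} :
    P ∈ satIdeal B 𝔪 e ↔ P.eval e ∈ 𝔪 := by
  rw [satIdeal_eq_comap_evalRingHom]; rfl

theorem satIdeal_isMaximal {𝔪 : Ideal B} (h𝔪 : 𝔪.IsMaximal) (e : B) :
    (satIdeal B 𝔪 e).IsMaximal := by
  rw [satIdeal_eq_comap_evalRingHom]
  exact Ideal.comap_isMaximal_of_surjective _ (eval_surjective e)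

theorem isUnit_eval_iff_forall_notMem_satIdeal (P : B[X]) (e : B) :
    IsUnit (P.eval e) ↔ ∀ 𝔪 : Ideal B, 𝔪.IsMaximal → P ∉ satIdeal B 𝔪 e := by
  simp only [mem_satIdeal]
  exact isUnit_iff_forall_notMem_of_isMaximal

theorem mem_RSigma_iff_forall_notMem_satIdeal (P : B[X]) :
    P ∈ RSigma B ↔ ∀ 𝔪 : Ideal B, 𝔪.IsMaximal → ∀ e : B, (e = 0 ∨ e = 1) →
      P ∉ satIdeal B 𝔪 e := by
  simp only [mem_RSigma, isUnit_eval_iff_forall_notMem_satIdeal]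
  aesop

theorem disjoint_RSigma_satIdeal {𝔪 : Ideal B} (h𝔪 : 𝔪.IsMaximal) {e : B} (he : e = 0 ∨ e = 1) :
    Disjoint (RSigma B : Set B[X]) (satIdeal B 𝔪 e) :=
  Set.disjoint_left.mpr fun P hP => (mem_RSigma_iff_forall_notMem_satIdeal P).mp hP 𝔪 h𝔪 e he

theorem exists_le_satIdeal_of_disjoint_RSigma {I : Ideal B[X]}
    (hI : Disjoint (RSigma B : Set B[X]) I) :
    ∃ (𝔪 : Ideal B) (e : B), 𝔪.IsMaximal ∧ (e = 0 ∨ e = 1) ∧ I ≤ satIdeal B 𝔪 e := by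
  suffices ∃ e : B, (e = 0 ∨ e = 1) ∧ I.map (evalRingHom e) ≠ ⊤ by
    obtain ⟨e, he, hne⟩ := this
    obtain ⟨𝔪, h𝔪, hle⟩ := Ideal.exists_le_maximal _ hne
    refine ⟨𝔪, e, h𝔪, he, ?_⟩
    rwa [satIdeal_eq_comap_evalRingHom, ← Ideal.map_le_iff_le_comap]
  by_contra! h
  have exists_eval_eq_one (e : B) (he : e = 0 ∨ e = 1) : ∃ p ∈ I, p.eval e = 1 :=
    (Ideal.mem_map_iff_of_surjective _ (eval_surjective e)).mp (h e he ▸ Submodule.mem_top)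
  obtain ⟨p, hpI, hp⟩ := exists_eval_eq_one 0 (.inl rfl)
  obtain ⟨q, hqI, hq⟩ := exists_eval_eq_one 1 (.inr rfl)
  have hmem : 1 - (1 - p) * (1 - q) ∈ I := by
    rw [show 1 - (1 - p) * (1 - q) = p + (1 - p) * q by ring]
    exact I.add_mem hpI (I.mul_mem_left _ hqI)
  refine Set.disjoint_left.mp hI ?_ hmem
  exact mem_RSigma.mpr ⟨by simp [hp], by simp [hq]⟩

theorem eq_map_satIdeal_of_isMaximal {M : Ideal (RLoc B)} (hM : M.IsMaximal) :
    ∃ (𝔪 : Ideal B) (e : B), 𝔪.IsMaximal ∧ (e = 0 ∨ e = 1) ∧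
      M = (satIdeal B 𝔪 e).map (algebraMap B[X] (RLoc B)) := by
  obtain ⟨𝔪, e, h𝔪, he, hle⟩ := exists_le_satIdeal_of_disjoint_RSigma
    ((IsLocalization.disjoint_under_iff (RSigma B) _ M).mpr hM.ne_top)
  refine ⟨𝔪, e, h𝔪, he, hM.eq_of_le ?_ ?_⟩
  · exact (IsLocalization.map_algebraMap_ne_top_iff_disjoint (RSigma B) _ _).mpr
      (disjoint_RSigma_satIdeal h𝔪 he)
  · exact IsLocalization.map_under (RSigma B) _ M ▸ Ideal.map_mono hle

theorem finite_maximalSpectrum_RLoc [Finite (MaximalSpectrum B)] :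
    Finite (MaximalSpectrum (RLoc B)) := by
  let extension (p : MaximalSpectrum B × ({0, 1} : Set B)) : Ideal (RLoc B) :=
    (satIdeal B p.1.asIdeal p.2).map (algebraMap B[X] (RLoc B))
  have mem_range (M : MaximalSpectrum (RLoc B)) : M.asIdeal ∈ Set.range extension := by
    obtain ⟨𝔪, e, h𝔪, he, hM⟩ := eq_map_satIdeal_of_isMaximal M.isMaximal
    exact ⟨(⟨𝔪, h𝔪⟩, ⟨e, he⟩), hM.symm⟩
  exact Finite.of_injective (fun M => (⟨M.asIdeal, mem_range M⟩ : Set.range extension))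
    fun M N h => MaximalSpectrum.ext (congrArg Subtype.val h)

end

theorem RLoc_is_semilocalization_at_the_four_corner_ideals
    (B : Type*) [CommRing B] [Finite (MaximalSpectrum B)] :
    -- the ideals `𝔪·B[t] + t·B[t]` and `𝔪·B[t] + (t−1)·B[t]` are maximal ideals of `B[t]`
    (∀ (𝔪 : Ideal B), 𝔪.IsMaximal → ∀ e : B, (e = 0 ∨ e = 1) →
        (satIdeal B 𝔪 e).IsMaximal) ∧
    -- `Σ` consists exactly of the polynomials lying in none of these ideals
    (∀ P : Polynomial B, P ∈ RSigma B ↔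
        ∀ (𝔪 : Ideal B), 𝔪.IsMaximal → ∀ e : B, (e = 0 ∨ e = 1) →
          P ∉ satIdeal B 𝔪 e) ∧
    -- every maximal ideal of `B[t]_Σ` is the extension of one of these ideals
    (∀ M : Ideal (RLoc B), M.IsMaximal →
        ∃ (𝔪 : Ideal B) (e : B), 𝔪.IsMaximal ∧ (e = 0 ∨ e = 1) ∧
          M = Ideal.map (algebraMap (Polynomial B) (RLoc B)) (satIdeal B 𝔪 e)) ∧
    -- in particular `B[t]_Σ` is semilocal
    Finite (MaximalSpectrum (RLoc B)) :=
  ⟨fun _ h𝔪 e _ => satIdeal_isMaximal h𝔪 e, mem_RSigma_iff_forall_notMem_satIdeal,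
    fun _ hM => eq_map_satIdeal_of_isMaximal hM, finite_maximalSpectrum_RLoc⟩
end
end

section
/- Let B be a semilocal commutative ring. Let (U, x) be a pointed B-scheme (U a scheme over Spec B with a point x ∈ U(B)) which is a pointed B-retract of a pointed open subscheme (V, 0) of (A^N_B, 0), where 0 denotes the zero section of affine N-space over B: there exist B-morphisms i : U → V and r : V → U with r ∘ i = id_U, i ∘ x = 0 and r ∘ 0 = x. Then there exist an affine open subscheme U′ of U through which x factors, an integer N′, an affine open subscheme V′ of A^{N′}_B through which the zero section factors, and pointed B-morphisms i′ : U′ → V′ and r′ : V′ → U′ with r′ ∘ i′ = id_{U′}, i′ carrying x to the zero point and r′ carrying the zero point to x; that is, (U′, x) is a pointed B-retract of an affine open subscheme (V′, 0) of some (A^{N′}_B, 0). -/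
noncomputable section

open AlgebraicGeometry CategoryTheory

universe u

/-- Affine `N`-space over `B`. -/
abbrev AffineSpaceB (B : Type u) [CommRing B] (N : ℕ) : Scheme.{u} :=
  Spec (CommRingCat.of (MvPolynomial (Fin N) B))

/-- The structure morphism of affine `N`-space over `B`. -/
noncomputable abbrev affineSpaceStruct (B : Type u) [CommRing B] (N : ℕ) :
    AffineSpaceB B N ⟶ Spec (CommRingCat.of B) :=
  Spec.map (CommRingCat.ofHom (algebraMap B (MvPolynomial (Fin N) B)))

/-- The zero section of affine `N`-space over `B`, given by the `B`-algebra
homomorphism `B[x₁,…,x_N] → B` sending each variable to `0`. -/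
noncomputable abbrev zeroSection (B : Type u) [CommRing B] (N : ℕ) :
    Spec (CommRingCat.of B) ⟶ AffineSpaceB B N :=
  Spec.map (CommRingCat.ofHom
    ((MvPolynomial.aeval (fun _ : Fin N => (0 : B))).toRingHom))

/-!
Since `B` is semilocal, prime avoidance yields a basic open `D(g) ⊆ V` containing the images of
the finitely many closed points of `Spec B`, hence the whole zero section, as every point of
`Spec B` specializes to a closed one. Let `W ⊆ V` be its preimage and `e = r ≫ i` the idempotent
endomorphism of `V`. Then `O = W ∩ e⁻¹(W)` is affine (as `V` is separated), stable under `e`, and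
contains the zero section, so `i` and `r` restrict to a pointed retraction between `i⁻¹(O)` and
`O`; finally `i⁻¹(O)` is affine, being a retract of an affine scheme.
-/
namespace PrimeSpectrum

variable {R : Type*} [CommRing R]

theorem exists_basicOpen_between_of_finite {O : Set (PrimeSpectrum R)} (hO : IsOpen O)
    {S : Set (PrimeSpectrum R)} (hS : S.Finite) (hSO : S ⊆ O) :
    ∃ g : R, S ⊆ basicOpen g ∧ (basicOpen g : Set (PrimeSpectrum R)) ⊆ O := by
  set I := vanishingIdeal Oᶜ
  -- `id` puts the union in the shape of `Ideal.subset_union_prime_finite`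
  have hI : ¬ (I : Set R) ⊆ ⋃ J ∈ asIdeal '' S, ((id J : Ideal R) : Set R) := by
    rw [Ideal.subset_union_prime_finite (hS.image _) (f := id) ⊥ ⊥
      (by rintro _ ⟨p, -, rfl⟩ - -; exact p.isPrime)]
    rintro ⟨_, ⟨p, hpS, rfl⟩, hIp⟩
    have hp : p ∈ closure Oᶜ := by
      rw [← zeroLocus_vanishingIdeal_eq_closure]; exact hIp
    rw [hO.isClosed_compl.closure_eq] at hp
    exact hp (hSO hpS)
  obtain ⟨g, hgI, hgS⟩ := Set.not_subset.mp hI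
  refine ⟨g, fun p hp hgp => hgS (Set.mem_biUnion (Set.mem_image_of_mem _ hp) hgp), ?_⟩
  intro p hgp
  by_contra hpO
  exact hgp ((mem_vanishingIdeal _ _).mp hgI p hpO)

theorem mem_open_of_forall_isMaximal {X : Type*} [TopologicalSpace X] {f : PrimeSpectrum R → X}
    (hf : Continuous f) {O : Set X} (hO : IsOpen O)
    (h : ∀ p : PrimeSpectrum R, p.asIdeal.IsMaximal → f p ∈ O) (p : PrimeSpectrum R) :
    f p ∈ O := by
  obtain ⟨M, hM, hpM⟩ := p.asIdeal.exists_le_maximal p.isPrime.ne_top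
  have hp : p ⤳ ⟨M, hM.isPrime⟩ := (le_iff_specializes _ _).mp hpM
  exact (hp.map hf).mem_open hO (h _ hM)

theorem exists_basicOpen_between_range {B : Type*} [CommRing B] [Finite (MaximalSpectrum B)]
    {f : PrimeSpectrum B → PrimeSpectrum R} (hf : Continuous f) {O : Set (PrimeSpectrum R)}
    (hO : IsOpen O) (hfO : Set.range f ⊆ O) :
    ∃ g : R, Set.range f ⊆ basicOpen g ∧ (basicOpen g : Set (PrimeSpectrum R)) ⊆ O := by
  obtain ⟨g, hg, hgO⟩ := exists_basicOpen_between_of_finite hO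
    (Set.finite_range (f ∘ MaximalSpectrum.toPrimeSpectrum))
    ((Set.range_comp_subset_range _ _).trans hfO)
  refine ⟨g, ?_, hgO⟩
  rintro _ ⟨p, rfl⟩
  exact mem_open_of_forall_isMaximal hf (basicOpen g).isOpen
    (fun q hq => hg ⟨⟨q.asIdeal, hq⟩, rfl⟩) p

end PrimeSpectrum

namespace AlgebraicGeometry

theorem Scheme.Opens.exists_lift {X Y : Scheme.{u}} (O : Y.Opens) (f : X ⟶ Y)
    (hf : ∀ x, f.base x ∈ O) : ∃ g : X ⟶ O, g ≫ O.ι = f :=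
  ⟨IsOpenImmersion.lift O.ι f (by rw [O.range_ι]; rintro _ ⟨x, rfl⟩; exact hf x),
    IsOpenImmersion.lift_fac _ _ _⟩

theorem exists_isAffineOpen_forall_mem_of_semilocal {B : Type u} [CommRing B]
    [Finite (MaximalSpectrum B)] {R : CommRingCat.{u}} {X : Scheme.{u}} (j : X ⟶ Spec R)
    [IsOpenImmersion j] (z : Spec (.of B) ⟶ X) :
    ∃ W : X.Opens, IsAffineOpen W ∧ ∀ t, z.base t ∈ W := by
  obtain ⟨g, hzg, hgj⟩ := PrimeSpectrum.exists_basicOpen_between_range (z ≫ j).base.hom.2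
    j.opensRange.2 (by rintro _ ⟨t, rfl⟩; exact ⟨z.base t, rfl⟩)
  exact ⟨j ⁻¹ᵁ PrimeSpectrum.basicOpen g,
    (IsAffineOpen.Spec_basicOpen g).preimage_of_isOpenImmersion j hgj, fun t => hzg ⟨t, rfl⟩⟩

instance Scheme.Opens.isSeparated {X : Scheme.{u}} [X.IsSeparated] (V : X.Opens) :
    V.toScheme.IsSeparated :=
  ⟨by rw [← Limits.terminal.comp_from V.ι]; infer_instance⟩

theorem IsAffineOpen.inf_preimage {X Y : Scheme.{u}} [Y.IsSeparated] {W : X.Opens}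
    (hW : IsAffineOpen W) (f : X ⟶ Y) {W' : Y.Opens} (hW' : IsAffineOpen W') :
    IsAffineOpen (W ⊓ f ⁻¹ᵁ W') := by
  have : IsAffine W := hW
  have : IsAffineHom (W.ι ≫ f) := IsAffineHom.of_comp _ (Limits.terminal.from Y)
  have hWf : W.ι ''ᵁ ((W.ι ≫ f) ⁻¹ᵁ W') = W ⊓ f ⁻¹ᵁ W' := by
    rw [Scheme.Hom.comp_preimage, Scheme.Hom.image_preimage_eq_opensRange_inf,
      Scheme.Opens.opensRange_ι]
  exact hWf ▸ (hW'.preimage _).image_of_isOpenImmersion W.ι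

theorem Scheme.Opens.inf_preimage_le_preimage {X : Scheme.{u}} {e : X ⟶ X} (he : e ≫ e = e)
    (W : X.Opens) : W ⊓ e ⁻¹ᵁ W ≤ e ⁻¹ᵁ (W ⊓ e ⁻¹ᵁ W) := by
  rintro x ⟨-, hex⟩
  refine ⟨hex, ?_⟩
  show (e ≫ e).base x ∈ W
  rwa [he]

theorem isAffine_of_retract {X Y : Scheme.{u}} [IsAffine Y] (h : Retract X Y) : IsAffine X := by
  have : IsClosedImmersion (h.i ≫ h.r) := h.retract ▸ inferInstance
  have : IsClosedImmersion h.i := .of_comp h.i h.r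
  exact isAffine_of_isAffineHom h.i

@[simps]
def Scheme.retractRestrict {U Y : Scheme.{u}} (h : Retract U Y) (O : Y.Opens)
    (hO : O ≤ h.r ⁻¹ᵁ h.i ⁻¹ᵁ O) : Retract (h.i ⁻¹ᵁ O).toScheme O where
  i := h.i.resLE O _ le_rfl
  r := h.r.resLE _ O hO
  retract := by simp [← cancel_mono (h.i ⁻¹ᵁ O).ι]


theorem exists_pointed_retract_of_le_preimage {S T U Y Z : Scheme.{u}} {p : U ⟶ S} {q : Z ⟶ S}
    (j : Y ⟶ Z) [IsOpenImmersion j] (h : Retract U Y) (hi : h.i ≫ j ≫ q = p)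
    (hr : h.r ≫ p = j ≫ q) {x : T ⟶ U} {z : T ⟶ Y} (hix : x ≫ h.i = z) {O : Y.Opens}
    (hO : O ≤ h.r ⁻¹ᵁ h.i ⁻¹ᵁ O) (hzO : ∀ t, z.base t ∈ O) :
    ∃ xU' : T ⟶ h.i ⁻¹ᵁ O, xU' ≫ (h.i ⁻¹ᵁ O).ι = x ∧
      ∃ zV' : T ⟶ j ''ᵁ O, zV' ≫ (j ''ᵁ O).ι = z ≫ j ∧
        ∃ (i' : (h.i ⁻¹ᵁ O).toScheme ⟶ j ''ᵁ O) (r' : (j ''ᵁ O).toScheme ⟶ h.i ⁻¹ᵁ O),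
          i' ≫ (j ''ᵁ O).ι ≫ q = (h.i ⁻¹ᵁ O).ι ≫ p ∧
          r' ≫ (h.i ⁻¹ᵁ O).ι ≫ p = (j ''ᵁ O).ι ≫ q ∧
          i' ≫ r' = 𝟙 _ ∧ xU' ≫ i' = zV' ∧ zV' ≫ r' = xU' := by
  obtain ⟨xU', hxU'⟩ := (h.i ⁻¹ᵁ O).exists_lift x fun t => by
    simpa [← hix] using hzO t
  obtain ⟨zO, hzO'⟩ := O.exists_lift z hzO
  have hxi : xU' ≫ h.i.resLE O _ le_rfl = zO := by
    rw [← cancel_mono O.ι, Category.assoc, Scheme.Hom.resLE_comp_ι, reassoc_of% hxU', hix, hzO']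
  have hzr : zO ≫ h.r.resLE _ O hO = xU' := by
    rw [← cancel_mono (h.i ⁻¹ᵁ O).ι, Category.assoc, Scheme.Hom.resLE_comp_ι, reassoc_of% hzO',
      hxU', ← hix, Category.assoc, h.retract, Category.comp_id]
  let e := j.isoImage O
  let ρ := Scheme.retractRestrict h O hO
  refine ⟨xU', hxU', zO ≫ e.hom, by simp [e, reassoc_of% hzO'], ρ.i ≫ e.hom, e.inv ≫ ρ.r,
    ?_, ?_, by simp [e], by simp [ρ, reassoc_of% hxi], by simp [ρ, hzr]⟩
  · simp [e, ρ, hi]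
  · simp [e, ρ, hr]

end AlgebraicGeometry

theorem pointed_retract_refines_to_affine_opens_general
    (B : Type u) [CommRing B] [Finite (MaximalSpectrum B)]
    -- the pointed `B`-scheme `(U, x)`
    (U : Scheme.{u}) (p : U ⟶ Spec (CommRingCat.of B))
    (x : Spec (CommRingCat.of B) ⟶ U)
    -- the pointed open subscheme `(V, 0)` of `(A^N_B, 0)`
    (N : ℕ) (V : (AffineSpaceB B N).Opens)
    (zV : Spec (CommRingCat.of B) ⟶ (V : Scheme.{u}))
    (hzV : zV ≫ V.ι = zeroSection B N)
    -- the pointed retraction data, over `Spec B`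
    (i : U ⟶ (V : Scheme.{u})) (r : (V : Scheme.{u}) ⟶ U)
    (hi : i ≫ V.ι ≫ affineSpaceStruct B N = p)
    (hr : r ≫ p = V.ι ≫ affineSpaceStruct B N)
    (hri : i ≫ r = 𝟙 U) (hix : x ≫ i = zV) :
    ∃ (U' : U.Opens), IsAffine (U' : Scheme.{u}) ∧
      ∃ (xU' : Spec (CommRingCat.of B) ⟶ (U' : Scheme.{u})), xU' ≫ U'.ι = x ∧
        ∃ (N' : ℕ) (V' : (AffineSpaceB B N').Opens), IsAffine (V' : Scheme.{u}) ∧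
          ∃ (zV' : Spec (CommRingCat.of B) ⟶ (V' : Scheme.{u})),
            zV' ≫ V'.ι = zeroSection B N' ∧
            ∃ (i' : (U' : Scheme.{u}) ⟶ (V' : Scheme.{u}))
              (r' : (V' : Scheme.{u}) ⟶ (U' : Scheme.{u})),
              -- `i′` and `r′` are `B`-morphisms
              i' ≫ V'.ι ≫ affineSpaceStruct B N' = U'.ι ≫ p ∧
              r' ≫ U'.ι ≫ p = V'.ι ≫ affineSpaceStruct B N' ∧
              -- `(U′, x)` is a pointed retract of `(V′, 0)`
              i' ≫ r' = 𝟙 (U' : Scheme.{u}) ∧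
              xU' ≫ i' = zV' ∧ zV' ≫ r' = xU' := by
  obtain ⟨W, hW, hzW⟩ := exists_isAffineOpen_forall_mem_of_semilocal V.ι zV
  have hzri : zV ≫ r ≫ i = zV := by rw [← hix, Category.assoc, reassoc_of% hri]
  set O := W ⊓ (r ≫ i) ⁻¹ᵁ W
  have hO : IsAffineOpen O := hW.inf_preimage (r ≫ i) hW
  have hOri : O ≤ r ⁻¹ᵁ i ⁻¹ᵁ O :=
    Scheme.Opens.inf_preimage_le_preimage (by rw [Category.assoc, reassoc_of% hri]) W
  have hzO : ∀ t, zV.base t ∈ O := fun t =>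
    ⟨hzW t, show (zV ≫ r ≫ i).base t ∈ W by rw [hzri]; exact hzW t⟩
  obtain ⟨xU', hxU', zV', hzV', i', r', hi', hr', hri', hix', hrz'⟩ :=
    exists_pointed_retract_of_le_preimage V.ι ⟨i, r, hri⟩ hi hr hix hOri hzO
  have : IsAffine (V.ι ''ᵁ O) := hO.image_of_isOpenImmersion V.ι
  exact ⟨_, isAffine_of_retract ⟨i', r', hri'⟩, xU', hxU', N, _, this, zV', hzV'.trans hzV,
    i', r', hi', hr', hri', hix', hrz'⟩

theorem pointed_retract_refines_to_affine_opens
    (B : Type u) [CommRing B] [Finite (MaximalSpectrum B)]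
    -- the pointed `B`-scheme `(U, x)`
    (U : Scheme.{u}) (p : U ⟶ Spec (CommRingCat.of B))
    (x : Spec (CommRingCat.of B) ⟶ U) (hx : x ≫ p = 𝟙 (Spec (CommRingCat.of B)))
    -- the pointed open subscheme `(V, 0)` of `(A^N_B, 0)`
    (N : ℕ) (V : (AffineSpaceB B N).Opens)
    (zV : Spec (CommRingCat.of B) ⟶ (V : Scheme.{u}))
    (hzV : zV ≫ V.ι = zeroSection B N)
    -- the pointed retraction data, over `Spec B`
    (i : U ⟶ (V : Scheme.{u})) (r : (V : Scheme.{u}) ⟶ U)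
    (hi : i ≫ V.ι ≫ affineSpaceStruct B N = p)
    (hr : r ≫ p = V.ι ≫ affineSpaceStruct B N)
    (hri : i ≫ r = 𝟙 U) (hix : x ≫ i = zV) (hrz : zV ≫ r = x) :
    ∃ (U' : U.Opens), IsAffine (U' : Scheme.{u}) ∧
      ∃ (xU' : Spec (CommRingCat.of B) ⟶ (U' : Scheme.{u})), xU' ≫ U'.ι = x ∧
        ∃ (N' : ℕ) (V' : (AffineSpaceB B N').Opens), IsAffine (V' : Scheme.{u}) ∧
          ∃ (zV' : Spec (CommRingCat.of B) ⟶ (V' : Scheme.{u})),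
            zV' ≫ V'.ι = zeroSection B N' ∧
            ∃ (i' : (U' : Scheme.{u}) ⟶ (V' : Scheme.{u}))
              (r' : (V' : Scheme.{u}) ⟶ (U' : Scheme.{u})),
              -- `i′` and `r′` are `B`-morphisms
              i' ≫ V'.ι ≫ affineSpaceStruct B N' = U'.ι ≫ p ∧
              r' ≫ U'.ι ≫ p = V'.ι ≫ affineSpaceStruct B N' ∧
              -- `(U′, x)` is a pointed retract of `(V′, 0)`
              i' ≫ r' = 𝟙 (U' : Scheme.{u}) ∧
              xU' ≫ i' = zV' ∧ zV' ≫ r' = xU' :=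
  pointed_retract_refines_to_affine_opens_general B U p x N V zV hzV i r hi hr hri hix
end
end

section
/- Let B be a semilocal commutative ring, let N ≥ 0, let V be an open subscheme of the affine space A^N_B, and let U be a scheme over Spec B which is a B-retract of V: there exist B-morphisms i : U → V and r : V → U with r ∘ i = id_U. Then any two elements of U(B) are R-equivalent; in particular, if U(B) is nonempty then U(B)/R is a singleton. -/
noncomputable section

open Polynomial

open AlgebraicGeometry CategoryTheory

universe u

/-- Direct R-equivalence of two `B`-points of a `B`-scheme `U` (with structure
morphism `p`): they are the two evaluations of a point of `U(B[t]_Σ)` over `Spec B`. -/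
def SchemeDirectR (B : Type u) [CommRing B] (U : Scheme.{u})
    (p : U ⟶ Spec (CommRingCat.of B))
    (y₀ y₁ : Spec (CommRingCat.of B) ⟶ U) : Prop :=
  ∃ y : Spec (CommRingCat.of (RLoc B)) ⟶ U,
    y ≫ p = Spec.map (CommRingCat.ofHom (algebraMap B (RLoc B))) ∧
    Spec.map (CommRingCat.ofHom (ev0 B).toRingHom) ≫ y = y₀ ∧
    Spec.map (CommRingCat.ofHom (ev1 B).toRingHom) ≫ y = y₁

/-
Two `B`-points `x₀, x₁` of an open `V ⊆ 𝔸ᴺ_B` are joined by the line `(1 - t) x₀ + t x₁`, a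
`B[t]_Σ`-point of `𝔸ᴺ_B`. It lands in `V`: writing the complement of `V` as `V(I)`, the ideal `I`
generates the unit ideal after evaluation at `t = 0` and at `t = 1`, and an element of `B[t]_Σ`
whose values at `0` and `1` are units is itself a unit. Composing with the retraction `V → U`
transports this to `U`.
-/

namespace RLoc

variable (B : Type*) [CommRing B]

def t : RLoc B := algebraMap B[X] (RLoc B) X

variable {B}

lemma ev0_algebraMap (P : B[X]) : ev0 B (algebraMap B[X] (RLoc B) P) = P.eval 0 := by
  rw [ev0, IsLocalization.liftAlgHom_apply, IsLocalization.lift_eq, ← coe_aeval_eq_eval]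
  rfl

lemma ev1_algebraMap (P : B[X]) : ev1 B (algebraMap B[X] (RLoc B) P) = P.eval 1 := by
  rw [ev1, IsLocalization.liftAlgHom_apply, IsLocalization.lift_eq, ← coe_aeval_eq_eval]
  rfl

@[simp] lemma ev0_t : ev0 B (t B) = 0 := by simp [t, ev0_algebraMap]

@[simp] lemma ev1_t : ev1 B (t B) = 1 := by simp [t, ev1_algebraMap]

lemma ev0_surjective : Function.Surjective (ev0 B) :=
  fun b => ⟨algebraMap B _ b, (ev0 B).commutes b⟩

lemma ev1_surjective : Function.Surjective (ev1 B) :=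
  fun b => ⟨algebraMap B _ b, (ev1 B).commutes b⟩

lemma isUnit_of_isUnit_ev0_of_isUnit_ev1 {x : RLoc B} (h0 : IsUnit (ev0 B x))
    (h1 : IsUnit (ev1 B x)) : IsUnit x := by
  obtain ⟨⟨P, s⟩, rfl⟩ := IsLocalization.mk'_surjective (RSigma B) x
  have hs := IsLocalization.mk'_spec (RLoc B) P s
  have hP : P ∈ RSigma B := by
    refine ⟨?_, ?_⟩
    · rw [← ev0_algebraMap, ← hs, map_mul, ev0_algebraMap]
      exact h0.mul (mem_RSigma.mp s.2).1
    · rw [← ev1_algebraMap, ← hs, map_mul, ev1_algebraMap]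
      exact h1.mul (mem_RSigma.mp s.2).2
  exact isUnit_of_mul_isUnit_left (hs ▸ IsLocalization.map_units (RLoc B) ⟨P, hP⟩)

/-- If `a, b ∈ J` have `ev₀ a = 1` and `ev₁ b = 1`, then `a + b - a b = 1 - (1 - a) (1 - b)`
is a unit at both ends. -/
lemma ideal_eq_top_of_map_ev0_of_map_ev1 {J : Ideal (RLoc B)} (h0 : J.map (ev0 B).toRingHom = ⊤)
    (h1 : J.map (ev1 B).toRingHom = ⊤) : J = ⊤ := by
  obtain ⟨a, haJ, ha⟩ :=
    (Ideal.mem_map_iff_of_surjective _ ev0_surjective).mp (h0 ▸ Submodule.mem_top (x := 1))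
  obtain ⟨b, hbJ, hb⟩ :=
    (Ideal.mem_map_iff_of_surjective _ ev1_surjective).mp (h1 ▸ Submodule.mem_top (x := 1))
  refine J.eq_top_of_isUnit_mem (sub_mem (add_mem haJ hbJ) (J.mul_mem_right b haJ)) ?_
  apply isUnit_of_isUnit_ev0_of_isUnit_ev1 <;> simp [ha, hb]

end RLoc

section Line

variable {B : Type*} [CommRing B] {σ : Type*}

def lineThrough (φ₀ φ₁ : MvPolynomial σ B →ₐ[B] B) : MvPolynomial σ B →ₐ[B] RLoc B :=
  MvPolynomial.aeval fun k =>
    algebraMap B (RLoc B) (φ₀ (.X k)) * (1 - RLoc.t B) +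
      algebraMap B (RLoc B) (φ₁ (.X k)) * RLoc.t B

lemma ev0_comp_lineThrough (φ₀ φ₁ : MvPolynomial σ B →ₐ[B] B) :
    (ev0 B).comp (lineThrough φ₀ φ₁) = φ₀ :=
  MvPolynomial.algHom_ext fun k => by simp [lineThrough]

lemma ev1_comp_lineThrough (φ₀ φ₁ : MvPolynomial σ B →ₐ[B] B) :
    (ev1 B).comp (lineThrough φ₀ φ₁) = φ₁ :=
  MvPolynomial.algHom_ext fun k => by simp [lineThrough]

end Line

section Spec

variable {A : Type u} [CommRing A]

lemma exists_ideal_range_Spec_map_subset_iff (V : (Spec (CommRingCat.of A)).Opens) :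
    ∃ I : Ideal A, ∀ {R : Type u} [CommRing R] (φ : A →+* R),
      Set.range (Spec.map (CommRingCat.ofHom φ)) ⊆ V ↔ I.map φ = ⊤ := by
  obtain ⟨I, hI⟩ := (PrimeSpectrum.isClosed_iff_zeroLocus_ideal _).mp V.isOpen.isClosed_compl
  refine ⟨I, fun φ => ?_⟩
  rw [← PrimeSpectrum.zeroLocus_empty_iff_eq_top, Ideal.map, PrimeSpectrum.zeroLocus_span,
    ← PrimeSpectrum.preimage_comap_zeroLocus, ← hI, Set.range_subset_iff,
    Set.eq_empty_iff_forall_notMem]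
  exact forall_congr' fun x => not_not.symm

lemma exists_algHom_eq_of_section {B : Type u} [CommRing B] [Algebra B A]
    (w : Spec (CommRingCat.of B) ⟶ Spec (CommRingCat.of A))
    (hw : w ≫ Spec.map (CommRingCat.ofHom (algebraMap B A)) = 𝟙 _) :
    ∃ φ : A →ₐ[B] B, Spec.map (CommRingCat.ofHom φ.toRingHom) = w := by
  have hφ : CommRingCat.ofHom (algebraMap B A) ≫ Spec.preimage w = 𝟙 _ :=
    Spec.map_injective (by rw [Spec.map_comp, Spec.map_preimage, hw, Spec.map_id])
  exact ⟨⟨(Spec.preimage w).hom, fun b => congr($hφ b)⟩, Spec.map_preimage w⟩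

end Spec

namespace SchemeDirectR

variable {B : Type u} [CommRing B] {X Y : Scheme.{u}}
  {pX : X ⟶ Spec (CommRingCat.of B)} {pY : Y ⟶ Spec (CommRingCat.of B)}
  {y₀ y₁ : Spec (CommRingCat.of B) ⟶ X}

lemma map (h : SchemeDirectR B X pX y₀ y₁) (f : X ⟶ Y) (hf : f ≫ pY = pX) :
    SchemeDirectR B Y pY (y₀ ≫ f) (y₁ ≫ f) := by
  obtain ⟨y, hy, hy₀, hy₁⟩ := h
  exact ⟨y ≫ f, by rw [Category.assoc, hf, hy], by rw [← hy₀, Category.assoc],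
    by rw [← hy₁, Category.assoc]⟩

lemma of_retract {i : X ⟶ Y} {r : Y ⟶ X} (hr : r ≫ pX = pY) (hri : i ≫ r = 𝟙 X)
    (h : SchemeDirectR B Y pY (y₀ ≫ i) (y₁ ≫ i)) : SchemeDirectR B X pX y₀ y₁ := by
  simpa only [Category.assoc, hri, Category.comp_id] using h.map r hr

end SchemeDirectR

theorem schemeDirectR_of_opens_affineSpace {B : Type u} [CommRing B] {N : ℕ}
    (V : (AffineSpaceB B N).Opens) (z₀ z₁ : Spec (CommRingCat.of B) ⟶ V)
    (h₀ : z₀ ≫ V.ι ≫ affineSpaceStruct B N = 𝟙 _)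
    (h₁ : z₁ ≫ V.ι ≫ affineSpaceStruct B N = 𝟙 _) :
    SchemeDirectR B V (V.ι ≫ affineSpaceStruct B N) z₀ z₁ := by
  obtain ⟨φ₀, hφ₀⟩ := exists_algHom_eq_of_section (z₀ ≫ V.ι) (by rwa [Category.assoc])
  obtain ⟨φ₁, hφ₁⟩ := exists_algHom_eq_of_section (z₁ ≫ V.ι) (by rwa [Category.assoc])
  obtain ⟨I, hI⟩ := exists_ideal_range_Spec_map_subset_iff V
  have map_eq_top {φ : MvPolynomial (Fin N) B →ₐ[B] B} {z : Spec (CommRingCat.of B) ⟶ V}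
      (hφ : Spec.map (CommRingCat.ofHom φ.toRingHom) = z ≫ V.ι) : I.map φ.toRingHom = ⊤ := by
    rw [← hI, hφ, ← Scheme.Opens.range_ι]
    rintro _ ⟨x, rfl⟩
    exact ⟨z x, rfl⟩
  have hψ : Set.range (Spec.map (CommRingCat.ofHom (lineThrough φ₀ φ₁).toRingHom)) ⊆
      Set.range V.ι := by
    rw [Scheme.Opens.range_ι, hI]
    refine RLoc.ideal_eq_top_of_map_ev0_of_map_ev1 ?_ ?_
    · rw [Ideal.map_map]
      change I.map ((ev0 B).comp (lineThrough φ₀ φ₁)).toRingHom = ⊤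
      rw [ev0_comp_lineThrough, map_eq_top hφ₀]
    · rw [Ideal.map_map]
      change I.map ((ev1 B).comp (lineThrough φ₀ φ₁)).toRingHom = ⊤
      rw [ev1_comp_lineThrough, map_eq_top hφ₁]
  have hev {e : RLoc B →ₐ[B] B} {φ : MvPolynomial (Fin N) B →ₐ[B] B}
      {z : Spec (CommRingCat.of B) ⟶ V} (he : e.comp (lineThrough φ₀ φ₁) = φ)
      (hφ : Spec.map (CommRingCat.ofHom φ.toRingHom) = z ≫ V.ι) :
      Spec.map (CommRingCat.ofHom e.toRingHom) ≫ IsOpenImmersion.lift V.ι _ hψ = z := by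
    rw [← cancel_mono V.ι, Category.assoc, IsOpenImmersion.lift_fac, ← hφ, ← he, ← Spec.map_comp]
    rfl
  refine ⟨IsOpenImmersion.lift V.ι _ hψ, ?_, hev (ev0_comp_lineThrough φ₀ φ₁) hφ₀,
    hev (ev1_comp_lineThrough φ₀ φ₁) hφ₁⟩
  rw [IsOpenImmersion.lift_fac_assoc, ← Spec.map_comp]
  exact congrArg (fun f => Spec.map (CommRingCat.ofHom f)) (lineThrough φ₀ φ₁).comp_algebraMap

theorem R_equivalence_trivial_on_retracts_of_opens_of_affine_space_general
    (B : Type u) [CommRing B] (N : ℕ)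
    (V : (AffineSpaceB B N).Opens)
    (U : Scheme.{u}) (p : U ⟶ Spec (CommRingCat.of B))
    -- the retraction data, over `Spec B`
    (i : U ⟶ (V : Scheme.{u})) (r : (V : Scheme.{u}) ⟶ U)
    (hi : i ≫ V.ι ≫ affineSpaceStruct B N = p)
    (hr : r ≫ p = V.ι ≫ affineSpaceStruct B N)
    (hri : i ≫ r = 𝟙 U) :
    -- any two `B`-points of `U` are R-equivalent ...
    (∀ y₀ y₁ : Spec (CommRingCat.of B) ⟶ U,
      y₀ ≫ p = 𝟙 (Spec (CommRingCat.of B)) → y₁ ≫ p = 𝟙 (Spec (CommRingCat.of B)) →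
      Relation.EqvGen (SchemeDirectR B U p) y₀ y₁) ∧
    -- ... in particular if `U(B) ≠ ∅` then `U(B)/R` is a singleton
    (Nonempty {y : Spec (CommRingCat.of B) ⟶ U // y ≫ p = 𝟙 (Spec (CommRingCat.of B))} →
      Subsingleton (Quot (fun y₀ y₁ :
          {y : Spec (CommRingCat.of B) ⟶ U // y ≫ p = 𝟙 (Spec (CommRingCat.of B))} =>
        SchemeDirectR B U p y₀.1 y₁.1))) := by
  have direct (y₀ y₁ : Spec (CommRingCat.of B) ⟶ U) (h₀ : y₀ ≫ p = 𝟙 _) (h₁ : y₁ ≫ p = 𝟙 _) :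
      SchemeDirectR B U p y₀ y₁ :=
    .of_retract hr hri <| schemeDirectR_of_opens_affineSpace V _ _
      (by rw [Category.assoc, hi, h₀]) (by rw [Category.assoc, hi, h₁])
  refine ⟨fun y₀ y₁ h₀ h₁ => .rel _ _ (direct y₀ y₁ h₀ h₁), fun _ => ⟨fun a b => ?_⟩⟩
  induction a using Quot.ind with | mk a
  induction b using Quot.ind with | mk b
  exact Quot.sound (direct a b a.2 b.2)

theorem R_equivalence_trivial_on_retracts_of_opens_of_affine_space
    (B : Type u) [CommRing B] [Finite (MaximalSpectrum B)] (N : ℕ)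
    (V : (AffineSpaceB B N).Opens)
    (U : Scheme.{u}) (p : U ⟶ Spec (CommRingCat.of B))
    -- the retraction data, over `Spec B`
    (i : U ⟶ (V : Scheme.{u})) (r : (V : Scheme.{u}) ⟶ U)
    (hi : i ≫ V.ι ≫ affineSpaceStruct B N = p)
    (hr : r ≫ p = V.ι ≫ affineSpaceStruct B N)
    (hri : i ≫ r = 𝟙 U) :
    -- any two `B`-points of `U` are R-equivalent ...
    (∀ y₀ y₁ : Spec (CommRingCat.of B) ⟶ U,
      y₀ ≫ p = 𝟙 (Spec (CommRingCat.of B)) → y₁ ≫ p = 𝟙 (Spec (CommRingCat.of B)) →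
      Relation.EqvGen (SchemeDirectR B U p) y₀ y₁) ∧
    -- ... in particular if `U(B) ≠ ∅` then `U(B)/R` is a singleton
    (Nonempty {y : Spec (CommRingCat.of B) ⟶ U // y ≫ p = 𝟙 (Spec (CommRingCat.of B))} →
      Subsingleton (Quot (fun y₀ y₁ :
          {y : Spec (CommRingCat.of B) ⟶ U // y ≫ p = 𝟙 (Spec (CommRingCat.of B))} =>
        SchemeDirectR B U p y₀.1 y₁.1))) :=
  R_equivalence_trivial_on_retracts_of_opens_of_affine_space_general B N V U p i r hi hr hri
end
end

section
/- Let B be a semilocal commutative ring with maximal ideals 𝔪₁,…,𝔪_c and residue fields κᵢ = B/𝔪ᵢ. Let V be an open subscheme of the affine space A^N_B, and let U be a scheme over Spec B which is a B-retract of V (there exist B-morphisms i : U → V and r : V → U with r ∘ i = id_U). Then the natural map U(B) → U(κ₁) × ⋯ × U(κ_c) is surjective. -/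
noncomputable section

open Polynomial

open AlgebraicGeometry CategoryTheory

universe u

/-!
STATEMENT 18: Let `B` be a semilocal commutative ring with maximal ideals
`𝔪₁,…,𝔪_c` and residue fields `κᵢ = B/𝔪ᵢ`.  Let `V` be an open subscheme of `A^N_B`
and `U` a `B`-scheme which is a `B`-retract of `V`.  Then the natural map
`U(B) → U(κ₁) × ⋯ × U(κ_c)` is surjective.
-/

/-!
Composing with `i`, the residue points become `κ_𝔪`-points of `A^N_B` over `B`; by the Chinese
remainder theorem their coordinates lift simultaneously to a `B`-point `x` of `A^N_B`. Every point
of `Spec B` specializes to a closed point, and closed points land in the open set `V`, so `x`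
factors through `V`; then `r` carries it to the required `B`-point of `U`.
-/

namespace PrimeSpectrum

theorem range_subset_of_forall_maximal {R Y : Type*} [CommRing R] [TopologicalSpace Y]
    {g : PrimeSpectrum R → Y} (hg : Continuous g) {W : Set Y} (hW : IsOpen W)
    (h : ∀ 𝔪 : MaximalSpectrum R, g 𝔪.toPrimeSpectrum ∈ W) : Set.range g ⊆ W := by
  rintro _ ⟨q, rfl⟩
  obtain ⟨M, hM, hqM⟩ := q.asIdeal.exists_le_maximal q.isPrime.ne_top
  have hspec : q ⤳ (⟨M, hM⟩ : MaximalSpectrum R).toPrimeSpectrum :=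
    (le_iff_specializes _ _).mp hqM
  exact (hspec.map hg).mem_open hW (h ⟨M, hM⟩)

theorem comap_quotient_mk_eq_toPrimeSpectrum {R : Type*} [CommRing R] (𝔪 : MaximalSpectrum R)
    (x : PrimeSpectrum (R ⧸ 𝔪.asIdeal)) :
    comap (Ideal.Quotient.mk 𝔪.asIdeal) x = 𝔪.toPrimeSpectrum := by
  have hle : 𝔪.asIdeal ≤ (comap (Ideal.Quotient.mk 𝔪.asIdeal) x).asIdeal :=
    Ideal.mk_ker.ge.trans (Ideal.ker_le_comap _)
  exact PrimeSpectrum.ext (𝔪.isMaximal.eq_of_le (comap _ x).isPrime.ne_top hle).symm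

end PrimeSpectrum

theorem MvPolynomial.exists_ringHom_lift_residues {σ B : Type*} [CommRing B]
    [Finite (MaximalSpectrum B)]
    (ψ : ∀ 𝔪 : MaximalSpectrum B, MvPolynomial σ B →+* B ⧸ 𝔪.asIdeal)
    (hψ : ∀ 𝔪, (ψ 𝔪).comp (algebraMap B _) = Ideal.Quotient.mk 𝔪.asIdeal) :
    ∃ φ : MvPolynomial σ B →+* B,
      φ.comp (algebraMap B _) = RingHom.id B ∧
        ∀ 𝔪, (Ideal.Quotient.mk 𝔪.asIdeal).comp φ = ψ 𝔪 := by
  have hcoprime : Pairwise (Function.onFun IsCoprime fun 𝔪 : MaximalSpectrum B ↦ 𝔪.asIdeal) :=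
    fun _ _ ne ↦ Ideal.isCoprime_of_isMaximal (MaximalSpectrum.ext_iff.ne.mp ne)
  choose b hb using fun j ↦ Ideal.pi_quotient_surjective hcoprime fun 𝔪 ↦ ψ 𝔪 (X j)
  refine ⟨eval b, RingHom.ext (eval_C (f := b)), fun 𝔪 ↦ ringHom_ext (fun c ↦ ?_) (fun j ↦ ?_)⟩
  · simpa using (RingHom.congr_fun (hψ 𝔪) c).symm
  · simpa using hb j 𝔪

theorem exists_affineSpace_point_lift_residues (B : Type u) [CommRing B]
    [Finite (MaximalSpectrum B)] (N : ℕ)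
    (w : ∀ 𝔪 : MaximalSpectrum B, Spec (CommRingCat.of (B ⧸ 𝔪.asIdeal)) ⟶ AffineSpaceB B N)
    (hw : ∀ 𝔪, w 𝔪 ≫ affineSpaceStruct B N =
      Spec.map (CommRingCat.ofHom (Ideal.Quotient.mk 𝔪.asIdeal))) :
    ∃ x : Spec (CommRingCat.of B) ⟶ AffineSpaceB B N,
      x ≫ affineSpaceStruct B N = 𝟙 _ ∧
      ∀ 𝔪, Spec.map (CommRingCat.ofHom (Ideal.Quotient.mk 𝔪.asIdeal)) ≫ x = w 𝔪 := by
  have hψ 𝔪 :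
      (Spec.preimage (w 𝔪)).hom.comp (algebraMap B _) = Ideal.Quotient.mk 𝔪.asIdeal := by
    have h : CommRingCat.ofHom (algebraMap B _) ≫ Spec.preimage (w 𝔪) =
        CommRingCat.ofHom (Ideal.Quotient.mk 𝔪.asIdeal) :=
      Spec.map_injective (by rw [Spec.map_comp, Spec.map_preimage, hw 𝔪])
    exact congrArg CommRingCat.Hom.hom h
  obtain ⟨φ, hφB, hφ⟩ := MvPolynomial.exists_ringHom_lift_residues _ hψ
  refine ⟨Spec.map (CommRingCat.ofHom φ), ?_, fun 𝔪 ↦ ?_⟩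
  · rw [← Spec.map_comp, ← CommRingCat.ofHom_comp, hφB]
    exact Spec.map_id _
  · rw [← Spec.map_comp, ← CommRingCat.ofHom_comp, hφ, CommRingCat.ofHom_hom, Spec.map_preimage]

theorem range_subset_range_ι_of_forall_residue {R : Type u} [CommRing R] {Y : Scheme.{u}}
    (x : Spec (CommRingCat.of R) ⟶ Y) (W : Y.Opens)
    (h : ∀ 𝔪 : MaximalSpectrum R, ∃ g : Spec (CommRingCat.of (R ⧸ 𝔪.asIdeal)) ⟶ W,
      Spec.map (CommRingCat.ofHom (Ideal.Quotient.mk 𝔪.asIdeal)) ≫ x = g ≫ W.ι) :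
    Set.range x.base ⊆ Set.range W.ι.base := by
  rw [Scheme.Opens.range_ι]
  refine PrimeSpectrum.range_subset_of_forall_maximal x.base.hom.continuous W.isOpen fun 𝔪 ↦ ?_
  obtain ⟨g, hg⟩ := h 𝔪
  obtain ⟨ζ⟩ : Nonempty (PrimeSpectrum (R ⧸ 𝔪.asIdeal)) := inferInstance
  rw [← PrimeSpectrum.comap_quotient_mk_eq_toPrimeSpectrum 𝔪 ζ, ← Scheme.Opens.range_ι]
  exact ⟨g.base ζ, congr(($hg).base ζ).symm⟩

theorem points_of_retract_of_open_of_affine_space_lift_residues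
    (B : Type u) [CommRing B] [Finite (MaximalSpectrum B)] (N : ℕ)
    (V : (AffineSpaceB B N).Opens)
    (U : Scheme.{u}) (p : U ⟶ Spec (CommRingCat.of B))
    -- the retraction data, over `Spec B`
    (i : U ⟶ (V : Scheme.{u})) (r : (V : Scheme.{u}) ⟶ U)
    (hi : i ≫ V.ι ≫ affineSpaceStruct B N = p)
    (hr : r ≫ p = V.ι ≫ affineSpaceStruct B N)
    (hri : i ≫ r = 𝟙 U)
    -- a family of points of `U` over the residue fields of `B`
    (z : ∀ 𝔪 : MaximalSpectrum B, Spec (CommRingCat.of (B ⧸ 𝔪.asIdeal)) ⟶ U)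
    (hz : ∀ 𝔪 : MaximalSpectrum B,
      z 𝔪 ≫ p = Spec.map (CommRingCat.ofHom (Ideal.Quotient.mk 𝔪.asIdeal))) :
    -- lifts to a point of `U(B)`
    ∃ y : Spec (CommRingCat.of B) ⟶ U,
      y ≫ p = 𝟙 (Spec (CommRingCat.of B)) ∧
      ∀ 𝔪 : MaximalSpectrum B,
        Spec.map (CommRingCat.ofHom (Ideal.Quotient.mk 𝔪.asIdeal)) ≫ y = z 𝔪 := by
  obtain ⟨x, hxB, hxz⟩ := exists_affineSpace_point_lift_residues B N (fun 𝔪 ↦ z 𝔪 ≫ i ≫ V.ι)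
    (fun 𝔪 ↦ by simp only [Category.assoc, hi, hz])
  have hxV : Set.range x.base ⊆ Set.range V.ι.base :=
    range_subset_range_ι_of_forall_residue x V fun 𝔪 ↦ ⟨z 𝔪 ≫ i, by rw [hxz, Category.assoc]⟩
  refine ⟨IsOpenImmersion.lift V.ι x hxV ≫ r, ?_, fun 𝔪 ↦ ?_⟩
  · rw [Category.assoc, hr, IsOpenImmersion.lift_fac_assoc, hxB]
  · have hlift : Spec.map (CommRingCat.ofHom (Ideal.Quotient.mk 𝔪.asIdeal)) ≫
        IsOpenImmersion.lift V.ι x hxV = z 𝔪 ≫ i := by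
      rw [← cancel_mono V.ι, Category.assoc, IsOpenImmersion.lift_fac, hxz, Category.assoc]
    rw [reassoc_of% hlift, hri, Category.comp_id]
end
end
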